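/- arXiv:2409.08748 — 2 statements merged into one kernel-verified Lean document; each statement's English description precedes it below -/
import Mathlib

section
/- Let ε, ε' ≥ 0, a = ‖ξ‖² + ε² > 0, a' = ‖ξ'‖² + ε'² > 0, and c ∈ ℝ with c² < a·a' (c plays the role of {ξ,ξ'}). Then for any d, d', q ∈ ℝ: ∫_ℝ (1/(π√(a·a' − c²)))·exp((2c(d−s)(d'−(q−s)) − a'(d−s)² − a(d'−(q−s))²)/(a·a' − c²)) ds = (1/(√π·√(2c + a + a')))·exp(−(d + d' − q)²/(2c + a + a')). -/
open MeasureTheory Real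

/- Writing `w = d + d' - q`, the exponent is a quadratic polynomial in `s` whose leading
coefficient is `-(2c + a + a') / (a a' - c²)`; completing the square splits off the factor
`exp (-w² / (2c + a + a'))`, and the remaining shifted Gaussian integrates to
`√(π (a a' - c²) / (2c + a + a'))`. -/

/-- The quadratic form `a x² + 2 c x y + a' y²` is positive at `(1, 1)` when it is positive
definite. -/
lemma two_mul_add_add_pos {a a' c : ℝ} (ha : 0 < a) (hc : c ^ 2 < a * a') :
    0 < 2 * c + a + a' := by
  have : 0 < a * (2 * c + a + a') := by nlinarith [sq_nonneg (a + c)]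
  exact pos_of_mul_pos_right this ha.le

lemma integral_exp_neg_mul_sub_sq (b m : ℝ) :
    ∫ s : ℝ, exp (-b * (s - m) ^ 2) = √(π / b) := by
  rw [integral_sub_right_eq_self (fun s => exp (-b * s ^ 2)) m, integral_gaussian]

lemma exponent_eq_completed_square {a a' c D K : ℝ} (hD : D = a * a' - c ^ 2)
    (hK : K = 2 * c + a + a') (hD0 : D ≠ 0) (hK0 : K ≠ 0) (d d' q s : ℝ) :
    (2 * c * (d - s) * (d' - (q - s)) - a' * (d - s) ^ 2 - a * (d' - (q - s)) ^ 2) / D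
      = -((d + d' - q) ^ 2) / K - K / D * (s - (d - (c + a) * (d + d' - q) / K)) ^ 2 := by
  field_simp
  subst hD hK
  ring

lemma one_div_pi_mul_sqrt_mul_sqrt_pi_div_div {D K : ℝ} (hD : 0 < D) (hK : 0 < K) :
    1 / (π * √D) * √(π / (K / D)) = 1 / (√π * √K) := by
  have hπ : √π * √π = π := mul_self_sqrt pi_pos.le
  rw [div_div_eq_mul_div, sqrt_div' _ hK.le, sqrt_mul pi_pos.le]
  have : √D ≠ 0 := by positivity
  have : √K ≠ 0 := by positivity
  have : √π ≠ 0 := by positivity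
  field_simp
  linear_combination hπ

theorem gaussian_convolution_identity_general (a a' c d d' q : ℝ)
    (ha : 0 < a) (hc : c ^ 2 < a * a') :
    ∫ s : ℝ, (1 / (π * Real.sqrt (a * a' - c ^ 2))) *
      Real.exp ((2 * c * (d - s) * (d' - (q - s)) - a' * (d - s) ^ 2
        - a * (d' - (q - s)) ^ 2) / (a * a' - c ^ 2))
    = (1 / (Real.sqrt π * Real.sqrt (2 * c + a + a'))) *
        Real.exp (-((d + d' - q) ^ 2) / (2 * c + a + a')) := by
  set D := a * a' - c ^ 2 with hD
  set K := 2 * c + a + a' with hK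
  have hD0 : 0 < D := sub_pos.mpr hc
  have hK0 : 0 < K := two_mul_add_add_pos ha hc
  simp_rw [exponent_eq_completed_square hD hK hD0.ne' hK0.ne', sub_eq_add_neg _ (K / D * _),
    exp_add, ← neg_mul, ← mul_assoc]
  rw [integral_const_mul, integral_exp_neg_mul_sub_sq, mul_right_comm,
    one_div_pi_mul_sqrt_mul_sqrt_pi_div_div hD0 hK0]

/-- Convolution identity for the two-variable Gaussian product (scalar content of
Lemma 3.5): with `a = ‖ξ‖² + ε² > 0`, `a' = ‖ξ'‖² + ε'² > 0` and `c² < a·a'`,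
integrating over `s` yields a single Gaussian in `d + d' − q` with variance
parameter `2c + a + a'`. -/
theorem gaussian_convolution_identity (a a' c d d' q : ℝ)
    (ha : 0 < a) (ha' : 0 < a') (hc : c ^ 2 < a * a') :
    ∫ s : ℝ, (1 / (π * Real.sqrt (a * a' - c ^ 2))) *
      Real.exp ((2 * c * (d - s) * (d' - (q - s)) - a' * (d - s) ^ 2
        - a * (d' - (q - s)) ^ 2) / (a * a' - c ^ 2))
    = (1 / (Real.sqrt π * Real.sqrt (2 * c + a + a'))) *
        Real.exp (-((d + d' - q) ^ 2) / (2 * c + a + a')) :=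
  gaussian_convolution_identity_general a a' c d d' q ha hc
end

section
/- For ε, ε' > 0, the quantity c(ε,ε') := (1/π)·∫_ℝ |√ε'·e^{−ε'²t²} − √ε·e^{−ε²t²}| dt is finite and tends to 0 as ε' → ε. Moreover, for operators Π(ε) = (1/π)∫_ℝ e^{−ε²t²−2iqt} U_t dt with U_t unitary, ‖√ε·Π(ε) − √ε'·Π(ε')‖_op ≤ c(ε,ε'). -/
open MeasureTheory Real Complex Filter Topology

/-! Since `‖U t‖ ≤ 1` and the phase `exp (-2iqt)` has modulus one, the triangle inequality for
Bochner integrals bounds `‖√ε Π(ε) - √ε' Π(ε')‖` by `(1/π) ∫ |√ε' e^{-ε'²t²} - √ε e^{-ε²t²}|`,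
which is `c(ε, ε')`. That `c(ε, ε') → 0` is dominated convergence: for `ε' ∈ [ε/2, 2ε]` the
weight `√ε' e^{-ε'²t²}` is dominated by `√(2ε) e^{-ε²t²/4}`. -/

lemma integrable_sqrt_mul_exp_neg_sq (e : ℝ) :
    Integrable (fun t : ℝ => √e * rexp (-e ^ 2 * t ^ 2)) := by
  rcases eq_or_ne e 0 with rfl | he
  · simp
  · simpa [neg_mul] using (integrable_exp_neg_mul_sq (b := e ^ 2) (by positivity)).const_mul √e

lemma sqrt_mul_exp_neg_sq_le {a b e : ℝ} (ha : 0 ≤ a) (hae : a ≤ e) (heb : e ≤ b) (t : ℝ) :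
    √e * rexp (-e ^ 2 * t ^ 2) ≤ √b * rexp (-a ^ 2 * t ^ 2) := by
  gcongr

lemma tendsto_integral_abs_sub_sqrt_mul_exp_neg_sq {ε : ℝ} (hε : 0 < ε) :
    Tendsto (fun e : ℝ => ∫ t : ℝ, |√e * rexp (-e ^ 2 * t ^ 2) - √ε * rexp (-ε ^ 2 * t ^ 2)|)
      (𝓝 ε) (𝓝 0) := by
  set bound : ℝ → ℝ := fun t => √(2 * ε) * rexp (-(ε / 2) ^ 2 * t ^ 2)
    + √ε * rexp (-ε ^ 2 * t ^ 2)
  have h_near : ∀ᶠ e in 𝓝 ε, e ∈ Set.Icc (ε / 2) (2 * ε) :=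
    Icc_mem_nhds (by linarith) (by linarith)
  have h_bound : ∀ᶠ e in 𝓝 ε, ∀ᵐ t, ‖|√e * rexp (-e ^ 2 * t ^ 2)
      - √ε * rexp (-ε ^ 2 * t ^ 2)|‖ ≤ bound t := by
    filter_upwards [h_near] with e he
    refine ae_of_all _ fun t => ?_
    have h_e : √e * rexp (-e ^ 2 * t ^ 2) ≤ bound t :=
      (sqrt_mul_exp_neg_sq_le (by positivity) he.1 he.2 t).trans
        (le_add_of_nonneg_right (by positivity))
    have h_ε : √ε * rexp (-ε ^ 2 * t ^ 2) ≤ bound t :=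
      le_add_of_nonneg_left (by positivity)
    rw [norm_abs_eq_norm, Real.norm_eq_abs]
    exact abs_sub_le_of_nonneg_of_le (by positivity) h_e (by positivity) h_ε
  have h_int : Integrable bound :=
    ((integrable_exp_neg_mul_sq (b := (ε / 2) ^ 2) (by positivity)).const_mul _).add
      (integrable_sqrt_mul_exp_neg_sq ε)
  have h_cont := continuousAt_of_dominated
    (Eventually.of_forall fun e => Continuous.aestronglyMeasurable (by fun_prop))
    h_bound h_int (ae_of_all _ fun t => by fun_prop)
  simpa using h_cont.tendsto

lemma norm_integral_smul_sub_integral_smul_le {α 𝕜 E : Type*} [MeasurableSpace α]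
    {μ : Measure α} [NontriviallyNormedField 𝕜] [NormedAddCommGroup E] [NormedSpace ℝ E]
    [NormedSpace 𝕜 E] {a b : α → 𝕜} {u : α → E} (ha : Integrable a μ) (hb : Integrable b μ)
    (hu : AEStronglyMeasurable u μ) (hu_le : ∀ x, ‖u x‖ ≤ 1) :
    ‖∫ x, a x • u x ∂μ - ∫ x, b x • u x ∂μ‖ ≤ ∫ x, ‖a x - b x‖ ∂μ := by
  have hau : Integrable (fun x => a x • u x) μ := ha.smul_bdd 1 hu (ae_of_all _ hu_le)
  have hbu : Integrable (fun x => b x • u x) μ := hb.smul_bdd 1 hu (ae_of_all _ hu_le)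
  rw [← integral_sub hau hbu]
  refine norm_integral_le_of_norm_le (ha.sub hb).norm (ae_of_all _ fun x => ?_)
  calc ‖a x • u x - b x • u x‖ = ‖(a x - b x) • u x‖ := by rw [sub_smul]
    _ ≤ ‖a x - b x‖ * ‖u x‖ := norm_smul_le _ _
    _ ≤ ‖a x - b x‖ := mul_le_of_le_one_right (norm_nonneg _) (hu_le x)

lemma cexp_neg_sq_sub_mul_I (e q t : ℝ) :
    cexp (-(e : ℂ) ^ 2 * (t : ℂ) ^ 2 - 2 * I * (q : ℂ) * (t : ℂ))
      = (rexp (-e ^ 2 * t ^ 2) : ℂ) * cexp ((-2 * q * t : ℝ) * I) := by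
  rw [ofReal_exp, ← Complex.exp_add]
  push_cast
  ring_nf

lemma integrable_sqrt_mul_cexp (e q : ℝ) : Integrable (fun t : ℝ =>
    (√e : ℂ) * cexp (-(e : ℂ) ^ 2 * (t : ℂ) ^ 2 - 2 * I * (q : ℂ) * (t : ℂ))) := by
  refine (integrable_sqrt_mul_exp_neg_sq e).mono'
    (Continuous.aestronglyMeasurable (by fun_prop)) (ae_of_all _ fun t => ?_)
  rw [cexp_neg_sq_sub_mul_I, norm_mul, norm_mul, norm_exp_ofReal_mul_I, norm_real, norm_real,
    Real.norm_of_nonneg (sqrt_nonneg e), Real.norm_of_nonneg (exp_pos _).le, mul_one]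

lemma norm_sqrt_mul_cexp_sub (e e' q t : ℝ) :
    ‖(√e : ℂ) * cexp (-(e : ℂ) ^ 2 * (t : ℂ) ^ 2 - 2 * I * (q : ℂ) * (t : ℂ))
      - (√e' : ℂ) * cexp (-(e' : ℂ) ^ 2 * (t : ℂ) ^ 2 - 2 * I * (q : ℂ) * (t : ℂ))‖
      = |√e' * rexp (-e' ^ 2 * t ^ 2) - √e * rexp (-e ^ 2 * t ^ 2)| := by
  have h_factor : (√e : ℂ) * cexp (-(e : ℂ) ^ 2 * (t : ℂ) ^ 2 - 2 * I * (q : ℂ) * (t : ℂ))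
      - (√e' : ℂ) * cexp (-(e' : ℂ) ^ 2 * (t : ℂ) ^ 2 - 2 * I * (q : ℂ) * (t : ℂ))
      = ((√e * rexp (-e ^ 2 * t ^ 2) - √e' * rexp (-e' ^ 2 * t ^ 2) : ℝ) : ℂ)
        * cexp ((-2 * q * t : ℝ) * I) := by
    rw [cexp_neg_sq_sub_mul_I, cexp_neg_sq_sub_mul_I]
    push_cast
    ring
  rw [h_factor, norm_mul, norm_exp_ofReal_mul_I, mul_one, norm_real, Real.norm_eq_abs,
    abs_sub_comm]

theorem sqrt_weighted_norm_continuity_general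
    {H : Type*} [NormedAddCommGroup H] [InnerProductSpace ℂ H]
    (U : ℝ → H →L[ℂ] H)
    (hU_iso : ∀ t (x : H), ‖U t x‖ = ‖x‖)
    (hU_meas : AEStronglyMeasurable U (volume : Measure ℝ))
    (q : ℝ)
    (P : ℝ → H →L[ℂ] H)
    (hP : ∀ e : ℝ, P e = (1 / (π : ℂ)) • ∫ t : ℝ,
      Complex.exp (-(e : ℂ) ^ 2 * (t : ℂ) ^ 2 - 2 * Complex.I * (q : ℂ) * (t : ℂ)) • U t)
    (c : ℝ → ℝ → ℝ)
    (hc : ∀ ε ε' : ℝ, c ε ε' = (1 / π) *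
      ∫ t : ℝ, |Real.sqrt ε' * Real.exp (-ε' ^ 2 * t ^ 2)
        - Real.sqrt ε * Real.exp (-ε ^ 2 * t ^ 2)|)
    (ε : ℝ) (hε : 0 < ε) :
    (∀ ε' : ℝ, 0 < ε' → Integrable (fun t : ℝ =>
      |Real.sqrt ε' * Real.exp (-ε' ^ 2 * t ^ 2)
        - Real.sqrt ε * Real.exp (-ε ^ 2 * t ^ 2)|)) ∧
    Tendsto (fun ε' : ℝ => c ε ε') (nhdsWithin ε (Set.Ioi (0 : ℝ))) (nhds 0) ∧
    (∀ ε' : ℝ, 0 < ε' →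
      ‖(Real.sqrt ε : ℂ) • P ε - (Real.sqrt ε' : ℂ) • P ε'‖ ≤ c ε ε') := by
  refine ⟨fun ε' _ => ((integrable_sqrt_mul_exp_neg_sq ε').sub
    (integrable_sqrt_mul_exp_neg_sq ε)).abs, ?_, fun ε' _ => ?_⟩
  · simp_rw [hc]
    simpa using ((tendsto_integral_abs_sub_sqrt_mul_exp_neg_sq hε).const_mul (1 / π)).mono_left
      nhdsWithin_le_nhds
  · have hU_le : ∀ t, ‖U t‖ ≤ 1 := fun t =>
      (U t).opNorm_le_bound zero_le_one fun x => by rw [hU_iso, one_mul]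
    have h_smul_P : ∀ e : ℝ, (√e : ℂ) • P e = (1 / (π : ℂ)) • ∫ t : ℝ,
        ((√e : ℂ) * cexp (-(e : ℂ) ^ 2 * (t : ℂ) ^ 2 - 2 * I * (q : ℂ) * (t : ℂ))) • U t := by
      intro e
      simp_rw [hP, smul_comm (√e : ℂ), ← integral_smul, smul_smul]
    have h_norm_inv_pi : ‖(1 / (π : ℂ))‖ = 1 / π := by
      rw [norm_div, norm_one, norm_real, Real.norm_of_nonneg pi_pos.le]
    rw [h_smul_P, h_smul_P, ← smul_sub, norm_smul, h_norm_inv_pi, hc]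
    gcongr
    simpa only [norm_sqrt_mul_cexp_sub] using norm_integral_smul_sub_integral_smul_le
      (integrable_sqrt_mul_cexp ε q) (integrable_sqrt_mul_cexp ε' q) hU_meas hU_le

/-- `c(ε,ε') = (1/π)∫ |√ε' e^{−ε'²t²} − √ε e^{−ε²t²}| dt` is finite and tends to `0`
as `ε' → ε` (within the positive reals); moreover, for
`Π(ε) = (1/π)∫ e^{−ε²t²−2iqt} U_t dt` with `U_t` unitary,
`‖√ε·Π(ε) − √ε'·Π(ε')‖ ≤ c(ε,ε')`. -/
theorem sqrt_weighted_norm_continuity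
    {H : Type*} [NormedAddCommGroup H] [InnerProductSpace ℂ H] [CompleteSpace H]
    (U : ℝ → H →L[ℂ] H)
    (hU_iso : ∀ t (x : H), ‖U t x‖ = ‖x‖)
    (hU_surj : ∀ t, Function.Surjective (U t))
    (hU_meas : AEStronglyMeasurable U (volume : Measure ℝ))
    (q : ℝ)
    (P : ℝ → H →L[ℂ] H)
    (hP : ∀ e : ℝ, P e = (1 / (π : ℂ)) • ∫ t : ℝ,
      Complex.exp (-(e : ℂ) ^ 2 * (t : ℂ) ^ 2 - 2 * Complex.I * (q : ℂ) * (t : ℂ)) • U t)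
    (c : ℝ → ℝ → ℝ)
    (hc : ∀ ε ε' : ℝ, c ε ε' = (1 / π) *
      ∫ t : ℝ, |Real.sqrt ε' * Real.exp (-ε' ^ 2 * t ^ 2)
        - Real.sqrt ε * Real.exp (-ε ^ 2 * t ^ 2)|)
    (ε : ℝ) (hε : 0 < ε) :
    (∀ ε' : ℝ, 0 < ε' → Integrable (fun t : ℝ =>
      |Real.sqrt ε' * Real.exp (-ε' ^ 2 * t ^ 2)
        - Real.sqrt ε * Real.exp (-ε ^ 2 * t ^ 2)|)) ∧
    Tendsto (fun ε' : ℝ => c ε ε') (nhdsWithin ε (Set.Ioi (0 : ℝ))) (nhds 0) ∧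
    (∀ ε' : ℝ, 0 < ε' →
      ‖(Real.sqrt ε : ℂ) • P ε - (Real.sqrt ε' : ℂ) • P ε'‖ ≤ c ε ε') :=
  sqrt_weighted_norm_continuity_general U hU_iso hU_meas q P hP c hc ε hε
end
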